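/- Let P be a projective right R-module that has no nonzero small submodule, and let M be a quasi-projective right R-module such that Hom_R(M/K, P) = 0 for every small submodule K of M. Then P ⊕ M is dual automorphism-invariant. -/

import Mathlib

open LinearMap Submodule

/-- A submodule N of M is small (superfluous) in M:
N + K = M implies K = M for every submodule K. -/
def IsSmall {R : Type*} [Ring R] {M : Type*} [AddCommGroup M] [Module R M]
    (N : Submodule R M) : Prop :=
  ∀ K : Submodule R M, N ⊔ K = ⊤ → K = ⊤

/-- M is a dual automorphism-invariant R-module: for any two small submodules
K₁, K₂ of M, every surjective homomorphism η : M/K₁ → M/K₂ whose kernel is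
small in M/K₁ lifts to an endomorphism φ of M (i.e. π₂ ∘ φ = η ∘ π₁). -/
def IsDualAutoInv (R M : Type*) [Ring R] [AddCommGroup M] [Module R M] : Prop :=
  ∀ (K₁ K₂ : Submodule R M), IsSmall K₁ → IsSmall K₂ →
    ∀ η : (M ⧸ K₁) →ₗ[R] (M ⧸ K₂), Function.Surjective η →
      IsSmall (LinearMap.ker η) →
      ∃ φ : M →ₗ[R] M, K₂.mkQ ∘ₗ φ = η ∘ₗ K₁.mkQ

/-- M is quasi-projective: every homomorphism M → M/N lifts to an endomorphism of M. -/
def IsQuasiProjective (R M : Type*) [Ring R] [AddCommGroup M] [Module R M] : Prop :=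
  ∀ (N : Submodule R M) (φ : M →ₗ[R] M ⧸ N), ∃ ψ : M →ₗ[R] M, N.mkQ ∘ₗ ψ = φ

/-
Lift `η ∘ π₁` separately on `P` and on `M`; on `P` this is projectivity. A small `K₂ ≤ P × M`
projects to a small, hence zero, submodule of `P`, so the first projection descends to
`(P × M)/K₂` with kernel the image of `M`. The composite `M → (P × M)/K₁ → (P × M)/K₂ → P` kills
`K₁ ∩ M`, which is small in `M`, so it vanishes; hence `M → (P × M)/K₂` lands in the image of `M`,
a quotient of `M`, and quasi-projectivity lifts it.
-/

section

variable {R M N P : Type*} [Ring R] [AddCommGroup M] [Module R M] [AddCommGroup N] [Module R N]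
  [AddCommGroup P] [Module R P]

theorem IsSmall.mono {K L : Submodule R M} (hL : IsSmall L) (hKL : K ≤ L) : IsSmall K :=
  fun J hJ => hL J (eq_top_iff.2 (hJ ▸ sup_le_sup_right hKL J))

theorem IsSmall.map {K : Submodule R M} (hK : IsSmall K) (f : M →ₗ[R] N)
    (hf : Function.Surjective f) : IsSmall (K.map f) := by
  intro J hJ
  have hker : ker f ≤ K ⊔ J.comap f := le_sup_of_le_right (ker_le_comap f)
  have hcomap : K ⊔ J.comap f = ⊤ := by
    rw [← comap_map_eq_self hker, Submodule.map_sup, map_comap_eq_of_surjective hf, hJ, comap_top]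
  rw [← map_comap_eq_of_surjective hf J, hK _ hcomap, Submodule.map_top, range_eq_top.2 hf]

theorem IsQuasiProjective.exists_comp_eq_of_range_le (hM : IsQuasiProjective R M)
    (q f : M →ₗ[R] N) (hf : range f ≤ range q) : ∃ ψ : M →ₗ[R] M, q ∘ₗ ψ = f := by
  obtain ⟨ψ, hψ⟩ := hM (ker q)
    (q.quotKerEquivRange.symm.toLinearMap ∘ₗ f.codRestrict _ fun x => hf (mem_range_self f x))
  refine ⟨ψ, LinearMap.ext fun x => ?_⟩
  have hx := congrArg (fun y => (q.quotKerEquivRange y : N)) (LinearMap.congr_fun hψ x)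
  simpa only [comp_apply, mkQ_apply, quotKerEquivRange_apply_mk, LinearEquiv.coe_coe,
    LinearEquiv.apply_symm_apply, codRestrict_apply] using hx

theorem le_ker_fst_of_isSmall (hPsmall : ∀ N : Submodule R P, IsSmall N → N = ⊥)
    {K : Submodule R (P × M)} (hK : IsSmall K) : K ≤ ker (fst R P M) :=
  map_le_iff_le_comap.1 (hPsmall _ (hK.map _ fst_surjective)).le

theorem ker_liftQ_fst_le_range_mkQ_comp_inr {K : Submodule R (P × M)}
    (hK : K ≤ ker (fst R P M)) :
    ker (K.liftQ (fst R P M) hK) ≤ range (K.mkQ ∘ₗ inr R P M) := by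
  intro x hx
  obtain ⟨⟨p, m⟩, rfl⟩ := K.mkQ_surjective x
  obtain rfl : p = 0 := hx
  exact ⟨m, rfl⟩

theorem comp_mkQ_comp_inr_eq_zero
    (hHom : ∀ K : Submodule R M, IsSmall K → ∀ f : (M ⧸ K) →ₗ[R] P, f = 0)
    {K : Submodule R (P × M)} (hK : IsSmall K) (u : ((P × M) ⧸ K) →ₗ[R] P) :
    u ∘ₗ K.mkQ ∘ₗ inr R P M = 0 := by
  have hKM : IsSmall (K.comap (inr R P M)) :=
    (hK.map _ snd_surjective).mono fun m hm => ⟨_, hm, rfl⟩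
  have hle : K.comap (inr R P M) ≤ ker (u ∘ₗ K.mkQ ∘ₗ inr R P M) := fun m hm => by
    rw [mem_ker, comp_apply, comp_apply, mkQ_apply, (Quotient.mk_eq_zero K).2 hm, map_zero]
  rw [← (K.comap (inr R P M)).liftQ_mkQ _ hle, hHom _ hKM (liftQ _ _ hle), zero_comp]

end

/-- If P is projective with no nonzero small submodule and M is quasi-projective with
Hom(M/K, P) = 0 for every small submodule K of M, then P ⊕ M is
dual automorphism-invariant. -/
theorem projective_quasiProjective_prod_dualAutoInv
    {R P M : Type*} [Ring R] [AddCommGroup P] [Module R P]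
    [AddCommGroup M] [Module R M]
    (hP : Module.Projective R P)
    (hPsmall : ∀ N : Submodule R P, IsSmall N → N = ⊥)
    (hM : IsQuasiProjective R M)
    (hHom : ∀ K : Submodule R M, IsSmall K → ∀ f : (M ⧸ K) →ₗ[R] P, f = 0) :
    IsDualAutoInv R (P × M) := by
  intro K₁ K₂ hK₁ hK₂ η _ _
  have hK₂fst := le_ker_fst_of_isSmall hPsmall hK₂
  obtain ⟨α, hα⟩ := Module.projective_lifting_property (h := hP) K₂.mkQ
    (η ∘ₗ K₁.mkQ ∘ₗ inl R P M) K₂.mkQ_surjective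
  have hrange : range (η ∘ₗ K₁.mkQ ∘ₗ inr R P M) ≤ range (K₂.mkQ ∘ₗ inr R P M) :=
    le_trans (range_le_ker_iff.2 (comp_mkQ_comp_inr_eq_zero hHom hK₁ (K₂.liftQ _ hK₂fst ∘ₗ η)))
      (ker_liftQ_fst_le_range_mkQ_comp_inr hK₂fst)
  obtain ⟨ψ, hψ⟩ := hM.exists_comp_eq_of_range_le _ _ hrange
  refine ⟨α.coprod (inr R P M ∘ₗ ψ), prod_ext ?_ ?_⟩
  · rw [comp_assoc, coprod_inl, hα, comp_assoc]
  · rw [comp_assoc, coprod_inr, ← comp_assoc, hψ, comp_assoc]
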